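/- For every θ with −π ≤ θ ≤ π and every real x, f(θ, x) ≥ g(θ) = 3 + 2cos θ − 4cos(θ/2); moreover equality holds at x = θ/2 + π, i.e., f(θ, θ/2 + π) = 3 + 2cos θ − 4cos(θ/2). -/
import Mathlib

open Real

/-- `f(θ₁, θ₂) = |e^{iθ₁} + e^{iθ₂} + e^{i(θ₁+θ₂)}|²`. -/
noncomputable def fFun (θ₁ θ₂ : ℝ) : ℝ :=
  3 + 2 * cos θ₁ + 2 * cos θ₂ + 2 * cos θ₁ * cos θ₂ + 2 * sin θ₁ * sin θ₂

/-- `g(θ) = 3 + 2cos θ − 4cos(θ/2)`. -/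
noncomputable def gFun (θ : ℝ) : ℝ := 3 + 2 * cos θ - 4 * cos (θ / 2)

/-- For every `θ` with `−π ≤ θ ≤ π` and every real `x`,
`f(θ, x) ≥ g(θ) = 3 + 2cos θ − 4cos(θ/2)`; moreover equality holds at
`x = θ/2 + π`. -/
theorem stmt_13 (θ : ℝ) (hθ₁ : -π ≤ θ) (hθ₂ : θ ≤ π) :
    (∀ x : ℝ, fFun θ x ≥ gFun θ) ∧ fFun θ (θ / 2 + π) = 3 + 2 * cos θ - 4 * cos (θ / 2) := by
  have hc : cos θ = 2 * cos (θ/2) ^ 2 - 1 := by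
    have := cos_two_mul (θ/2); rwa [show 2*(θ/2)=θ by ring] at this
  have hs : sin θ = 2 * sin (θ/2) * cos (θ/2) := by
    have := sin_two_mul (θ/2); rwa [show 2*(θ/2)=θ by ring] at this
  have hcn : 0 ≤ cos (θ/2) :=
    Real.cos_nonneg_of_mem_Icc ⟨by linarith, by linarith⟩
  constructor
  · intro x
    have hx : cos (x - θ/2) = cos x * cos (θ/2) + sin x * sin (θ/2) := cos_sub x (θ/2)
    have hb : -1 ≤ cos (x - θ/2) := neg_one_le_cos _
    have key := mul_nonneg hcn (by linarith : (0:ℝ) ≤ cos (x - θ/2) + 1)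
    rw [hx] at key
    simp only [fFun, gFun, ge_iff_le]
    rw [hc, hs]
    nlinarith [key]
  · simp only [fFun, cos_add, sin_add, cos_pi, sin_pi]
    linear_combination (-2*cos (θ/2))*hc + (-2*sin (θ/2))*hs + (-4*cos (θ/2))*(sin_sq_add_cos_sq (θ/2))
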